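/- arXiv:1904.00827 — 5 statements merged into one kernel-verified Lean document; each statement's English description precedes it below -/
import Mathlib

section
/- The category of small ucwfs and strict ucwf-morphisms has an initial object, which can be constructed concretely as follows: the base category N has natural numbers as objects with N(n,m) = n^m (m-tuples of elements of {1,...,n}), composition given by reindexing; Tm(n) = {1,...,n} with i[(a_1,...,a_m)] = a_i; s(n) = n+1; p_n = (1,...,n); q_n = n+1. This structure is an initial object in the category of ucwfs. -/
open CategoryTheory Opposite

/-- A unityped category with families (ucwf): a category `C` with a terminal
object (the empty context), a presheaf of terms, and context comprehension. -/
structure Ucwf where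
  C : Type
  [cat : Category C]
  empty : C
  emptySub : ∀ Γ : C, Γ ⟶ empty
  empty_unique : ∀ {Γ : C} (f : Γ ⟶ empty), f = emptySub Γ
  Tm : Cᵒᵖ ⥤ Type
  s : C → C
  p : ∀ n : C, s n ⟶ n
  q : ∀ n : C, Tm.obj (op (s n))
  pair : ∀ {m n : C}, (m ⟶ n) → Tm.obj (op m) → (m ⟶ s n)
  pair_p : ∀ {m n : C} (γ : m ⟶ n) (a : Tm.obj (op m)), pair γ a ≫ p n = γ
  pair_q : ∀ {m n : C} (γ : m ⟶ n) (a : Tm.obj (op m)),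
    Tm.map (pair γ a).op (q n) = a
  pair_unique : ∀ {m n : C} (γ : m ⟶ n) (a : Tm.obj (op m)) (δ : m ⟶ s n),
    δ ≫ p n = γ → Tm.map δ.op (q n) = a → δ = pair γ a

attribute [instance] Ucwf.cat

/-- A strict morphism of ucwfs: a functor preserving the terminal object, the
terms (via a natural transformation) and context comprehension on the nose. -/
structure UcwfHom (X Y : Ucwf) where
  F : X.C ⥤ Y.C
  σ : ∀ Γ : X.C, X.Tm.obj (op Γ) → Y.Tm.obj (op (F.obj Γ))
  σ_natural : ∀ {Δ Γ : X.C} (γ : Δ ⟶ Γ) (a : X.Tm.obj (op Γ)),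
    σ Δ (X.Tm.map γ.op a) = Y.Tm.map (F.map γ).op (σ Γ a)
  pres_empty : F.obj X.empty = Y.empty
  pres_s : ∀ n : X.C, F.obj (X.s n) = Y.s (F.obj n)
  pres_p : ∀ n : X.C, F.map (X.p n) = eqToHom (pres_s n) ≫ Y.p (F.obj n)
  pres_q : ∀ n : X.C,
    σ (X.s n) (X.q n) = Y.Tm.map (eqToHom (pres_s n)).op (Y.q (F.obj n))

/-- The category of renamings: objects are natural numbers, and a morphism
`n ⟶ m` is an `m`-tuple of elements of `{1,…,n}` (i.e. `N(n,m) = n^m`). -/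
structure NCtx where
  n : ℕ

instance : Category NCtx where
  Hom a b := Fin b.n → Fin a.n
  id _ := fun i => i
  comp f g := f ∘ g

/-- The initial ucwf: base category the renamings, `Tm(n) = {1,…,n}` the
variables, substitution `i[(a_1,…,a_m)] = a_i`, `s(n) = n+1`,
`p_n = (1,…,n)` and `q_n = n+1`. -/
def NUcwf : Ucwf where
  C := NCtx
  empty := ⟨0⟩
  emptySub _ := fun i => i.elim0
  empty_unique f := funext fun i => i.elim0
  Tm :=
    { obj := fun X => Fin X.unop.n
      map := fun h => TypeCat.ofHom fun a => h.unop a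
      map_id := fun _ => rfl
      map_comp := fun _ _ => rfl }
  s x := ⟨x.n + 1⟩
  p x := Fin.castSucc
  q x := Fin.last x.n
  pair {m n} γ a := (Fin.snoc γ a : Fin (n.n + 1) → Fin m.n)
  pair_p {m n} γ a := funext fun i => by
    show (Fin.snoc γ a : Fin (n.n + 1) → Fin m.n) (Fin.castSucc i) = γ i
    simp
  pair_q {m n} γ a := by
    show (Fin.snoc γ a : Fin (n.n + 1) → Fin m.n) (Fin.last n.n) = a
    simp
  pair_unique {m n} γ a δ h1 h2 := funext fun i => by
    refine Fin.lastCases ?_ ?_ i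
    · show δ (Fin.last n.n) = (Fin.snoc γ a : Fin (n.n + 1) → Fin m.n) (Fin.last n.n)
      rw [Fin.snoc_last]
      exact h2
    · intro j
      show δ (Fin.castSucc j) = (Fin.snoc γ a : Fin (n.n + 1) → Fin m.n) (Fin.castSucc j)
      rw [Fin.snoc_castSucc]
      exact congrFun h1 j

/-!
The renaming ucwf maps into any ucwf `Y` by iterating comprehension on the empty context:
`n ↦ sⁿ(0)`, the variable `i` goes to `q` weakened by the projections `p`, and a renaming
`(a₁, …, aₘ)` goes to the iterated pairing of the images of the `aᵢ`. A morphism into `sᵐ(0)`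
is determined by the `m` terms it pulls the variables back to, by the universal property of
pairing. A strict morphism preserves `0`, `s`, `p` and `q`, so by induction it agrees with this
one on contexts and variables, and hence, by that determination, also on renamings.
-/

namespace Ucwf

variable (Y : Ucwf)

-- Reducible, so that `rw` identifies `Y.ctx (n + 1)` with `Y.s (Y.ctx n)`.
abbrev ctx : ℕ → Y.C
  | 0 => Y.empty
  | n + 1 => Y.s (ctx n)

def var : (n : ℕ) → Fin n → Y.Tm.obj (op (Y.ctx n))
  | n + 1, i =>
    Fin.lastCases (Y.q (Y.ctx n)) (fun j => Y.Tm.map (Y.p (Y.ctx n)).op (var n j)) i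

@[simp]
lemma var_last (n : ℕ) : Y.var (n + 1) (Fin.last n) = Y.q (Y.ctx n) := by
  rw [var, Fin.lastCases_last]

@[simp]
lemma var_castSucc (n : ℕ) (j : Fin n) :
    Y.var (n + 1) j.castSucc = Y.Tm.map (Y.p (Y.ctx n)).op (Y.var n j) := by
  rw [var, Fin.lastCases_castSucc]

lemma tm_map_comp_apply {Γ Δ Θ : Y.C} (f : Γ ⟶ Δ) (g : Δ ⟶ Θ) (a : Y.Tm.obj (op Θ)) :
    Y.Tm.map (f ≫ g).op a = Y.Tm.map f.op (Y.Tm.map g.op a) := by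
  rw [op_comp, Functor.map_comp_apply]

lemma tm_map_id_apply (Γ : Y.C) (a : Y.Tm.obj (op Γ)) : Y.Tm.map (𝟙 Γ).op a = a := by
  rw [op_id, Functor.map_id_apply]

def rename : {n m : ℕ} → (Fin m → Fin n) → (Y.ctx n ⟶ Y.ctx m)
  | _, 0, _ => Y.emptySub _
  | _, m + 1, f => Y.pair (rename (f ∘ Fin.castSucc)) (Y.var _ (f (Fin.last m)))

lemma rename_comp_p {n m : ℕ} (f : Fin (m + 1) → Fin n) :
    Y.rename f ≫ Y.p (Y.ctx m) = Y.rename (f ∘ Fin.castSucc) :=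
  Y.pair_p _ _

lemma var_rename {n m : ℕ} (f : Fin m → Fin n) (i : Fin m) :
    Y.Tm.map (Y.rename f).op (Y.var m i) = Y.var n (f i) := by
  induction m with
  | zero => exact i.elim0
  | succ m ih =>
    induction i using Fin.lastCases with
    | last => rw [var_last]; exact Y.pair_q _ _
    | cast j => rw [var_castSucc, ← tm_map_comp_apply, rename_comp_p, ih]; rfl

lemma eq_rename_of_var {n m : ℕ} (f : Fin m → Fin n) (δ : Y.ctx n ⟶ Y.ctx m)
    (h : ∀ i, Y.Tm.map δ.op (Y.var m i) = Y.var n (f i)) : δ = Y.rename f := by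
  induction m with
  | zero => exact Y.empty_unique δ
  | succ m ih =>
    refine Y.pair_unique _ _ _ (ih _ _ fun j => ?_) (by simpa using h (Fin.last m))
    rw [tm_map_comp_apply, ← var_castSucc, h]
    rfl

lemma rename_castSucc (n : ℕ) :
    Y.rename (Fin.castSucc : Fin n → Fin (n + 1)) = Y.p (Y.ctx n) :=
  (Y.eq_rename_of_var _ _ fun i => (Y.var_castSucc n i).symm).symm

lemma tm_map_eqToHom_q {Γ Δ : Y.C} (h : Γ = Δ) :
    Y.Tm.map (eqToHom (congrArg Y.s h)).op (Y.q Δ) = Y.q Γ := by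
  subst h; simp

lemma eqToHom_comp_p {Γ Δ : Y.C} (h : Γ = Δ) :
    eqToHom (congrArg Y.s h) ≫ Y.p Δ = Y.p Γ ≫ eqToHom h := by
  subst h; simp

end Ucwf

namespace NUcwf

variable (Y : Ucwf)

def liftFunctor : NCtx ⥤ Y.C where
  obj Γ := Y.ctx Γ.n
  map f := Y.rename f
  map_id Γ := (Y.eq_rename_of_var _ _ fun i => Y.tm_map_id_apply _ _).symm
  map_comp f g := (Y.eq_rename_of_var _ _ fun i => by
    rw [Ucwf.tm_map_comp_apply, Ucwf.var_rename, Ucwf.var_rename]; rfl).symm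

def lift : UcwfHom NUcwf Y where
  F := liftFunctor Y
  σ Γ a := Y.var Γ.n a
  σ_natural γ a := (Y.var_rename γ a).symm
  pres_empty := rfl
  pres_s _ := rfl
  pres_p n := (Y.rename_castSucc n.n).trans (Category.id_comp _).symm
  pres_q n := (Y.var_last n.n).trans (Y.tm_map_id_apply _ _).symm

end NUcwf

namespace UcwfHom

variable {X Y : Ucwf}

lemma ext_of_F_eq {f g : UcwfHom X Y} (hF : f.F = g.F)
    (hσ : ∀ Γ a, f.σ Γ a = Y.Tm.map (eqToHom (congrArg (·.obj Γ) hF)).op (g.σ Γ a)) :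
    f = g := by
  cases f
  cases g
  dsimp only at hF hσ
  subst hF
  congr
  funext Γ a
  exact (hσ Γ a).trans (Y.tm_map_id_apply _ _)

variable (g : UcwfHom NUcwf Y)

-- `NUcwf.C` is `NCtx` only after unfolding `NUcwf`, which `rw` does not do: contexts are taken
-- in `NCtx`, and steps through the fields of `g` are terms rather than rewrites.

lemma obj_eq_ctx (Γ : NCtx) : g.F.obj Γ = Y.ctx Γ.n := by
  obtain ⟨n⟩ := Γ
  induction n with
  | zero => exact g.pres_empty
  | succ n ih => exact (g.pres_s ⟨n⟩).trans (congrArg Y.s ih)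

lemma σ_eq_var (Γ : NCtx) (i : Fin Γ.n) :
    g.σ Γ i = Y.Tm.map (eqToHom (g.obj_eq_ctx Γ)).op (Y.var Γ.n i) := by
  obtain ⟨n⟩ := Γ
  induction n with
  | zero => exact i.elim0
  | succ n ih =>
    induction i using Fin.lastCases with
    | last =>
      have hq : g.σ ⟨n + 1⟩ (Fin.last n) =
          Y.Tm.map (eqToHom (g.pres_s ⟨n⟩)).op (Y.q (g.F.obj ⟨n⟩)) :=
        g.pres_q ⟨n⟩
      rw [hq, Ucwf.var_last, ← Y.tm_map_eqToHom_q (g.obj_eq_ctx ⟨n⟩),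
        ← Ucwf.tm_map_comp_apply, eqToHom_trans]
      rfl
    | cast j =>
      have hp : g.σ ⟨n + 1⟩ j.castSucc =
          Y.Tm.map (eqToHom (g.pres_s ⟨n⟩) ≫ Y.p (g.F.obj ⟨n⟩)).op (g.σ ⟨n⟩ j) :=
        (g.σ_natural (NUcwf.p ⟨n⟩) j).trans
          (congrArg (fun φ => Y.Tm.map φ.op (g.σ ⟨n⟩ j)) (g.pres_p ⟨n⟩))
      rw [hp, ih, Ucwf.var_castSucc, ← Ucwf.tm_map_comp_apply, ← Ucwf.tm_map_comp_apply,
        Category.assoc, ← Ucwf.eqToHom_comp_p, ← Category.assoc, eqToHom_trans]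
      rfl

lemma conj_map_eq_rename {Γ Δ : NCtx} (γ : Γ ⟶ Δ) :
    eqToHom (g.obj_eq_ctx Γ).symm ≫ g.F.map γ ≫ eqToHom (g.obj_eq_ctx Δ) = Y.rename γ := by
  refine Y.eq_rename_of_var _ _ fun i => ?_
  calc Y.Tm.map (eqToHom (g.obj_eq_ctx Γ).symm ≫ g.F.map γ ≫ eqToHom (g.obj_eq_ctx Δ)).op
        (Y.var Δ.n i)
      = Y.Tm.map (eqToHom (g.obj_eq_ctx Γ).symm).op (Y.Tm.map (g.F.map γ).op (g.σ Δ i)) := by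
        rw [Ucwf.tm_map_comp_apply, Ucwf.tm_map_comp_apply, σ_eq_var]
    _ = Y.Tm.map (eqToHom (g.obj_eq_ctx Γ).symm).op (g.σ Γ (γ i)) :=
        congrArg _ (g.σ_natural γ i).symm
    _ = Y.var Γ.n (γ i) := by
        rw [σ_eq_var, ← Ucwf.tm_map_comp_apply, eqToHom_trans, eqToHom_refl,
          Ucwf.tm_map_id_apply]

lemma F_eq_liftFunctor : g.F = NUcwf.liftFunctor Y :=
  CategoryTheory.Functor.ext g.obj_eq_ctx fun (_ _ : NCtx) γ =>
    ((comp_eqToHom_iff _ _ _).mp ((eqToHom_comp_iff _ _ _).mp (g.conj_map_eq_rename γ))).trans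
      (Category.assoc _ _ _)

end UcwfHom

/-- the concrete ucwf of renamings and variables is an initial
object in the category of small ucwfs and strict ucwf-morphisms: for every
ucwf there is a unique strict ucwf-morphism from it. -/
theorem NUcwf_initial (Y : Ucwf) :
    ∃ f : UcwfHom NUcwf Y, ∀ g : UcwfHom NUcwf Y, g = f :=
  ⟨NUcwf.lift Y, fun g => UcwfHom.ext_of_F_eq g.F_eq_liftFunctor g.σ_eq_var⟩
end

section
/- Let C be a ucwf. Then λβη-structures on C are in bijective correspondence with natural isomorphisms of presheaves λ : Tm(s(−)) ≅ Tm(−), where s acts on morphisms by s(γ) = ⟨γ ∘ p, q⟩. Specifically: (1) the abstraction operator of any λβη-structure is such a natural isomorphism; (2) given such a natural isomorphism λ, there is a unique λβη-structure whose abstraction operator is λ, with application defined by ap_n(c, a) = λ_n^{-1}(c)[⟨id_n, a⟩]. -/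
open CategoryTheory Opposite

/-- The functorial action of `s` on substitutions: `s(γ) = ⟨γ ∘ p, q⟩`. -/
def Ucwf.sMap (U : Ucwf) {m n : U.C} (γ : m ⟶ n) : U.s m ⟶ U.s n :=
  U.pair (U.p m ≫ γ) (U.q m)

/-- A λβη-structure on a ucwf: abstraction and application operators
satisfying the substitution laws and the β- and η-rules. -/
structure LamBetaEtaStructure (U : Ucwf) where
  lam : ∀ n : U.C, U.Tm.obj (op (U.s n)) → U.Tm.obj (op n)
  ap : ∀ n : U.C, U.Tm.obj (op n) → U.Tm.obj (op n) → U.Tm.obj (op n)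
  lam_sub : ∀ {m n : U.C} (γ : m ⟶ n) (b : U.Tm.obj (op (U.s n))),
    U.Tm.map γ.op (lam n b) = lam m (U.Tm.map (U.sMap γ).op b)
  ap_sub : ∀ {m n : U.C} (γ : m ⟶ n) (c a : U.Tm.obj (op n)),
    U.Tm.map γ.op (ap n c a) = ap m (U.Tm.map γ.op c) (U.Tm.map γ.op a)
  beta : ∀ (n : U.C) (b : U.Tm.obj (op (U.s n))) (a : U.Tm.obj (op n)),
    ap n (lam n b) a = U.Tm.map (U.pair (𝟙 n) a).op b
  eta : ∀ (n : U.C) (c : U.Tm.obj (op n)),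
    lam n (ap (U.s n) (U.Tm.map (U.p n).op c) (U.q n)) = c

/-!
The β- and η-rules say precisely that `b ↦ λ b` and `c ↦ ap (c[p]) q` are mutually inverse, once
the substitution law for `λ` and the identity `⟨id, q⟩ ∘ s(p) = id` rewrite `ap ((λ b)[p]) q` as
`b`. Conversely, a natural bijection `λ` has a natural inverse, and `ap c a := λ⁻¹(c)[⟨id, a⟩]`
satisfies the β- and η-rules and the substitution law for `ap` by the same identity and
`⟨id, a[γ]⟩ ∘ s(γ) = γ ∘ ⟨id, a⟩`. Uniqueness holds because β forces this formula for `ap`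
on the image of `λ`, which is everything.
-/

namespace Ucwf

variable (U : Ucwf)

lemma map_op_map_op {k m n : U.C} (f : k ⟶ m) (g : m ⟶ n) (x : U.Tm.obj (op n)) :
    U.Tm.map f.op (U.Tm.map g.op x) = U.Tm.map (f ≫ g).op x := by
  rw [op_comp, Functor.map_comp_apply]

lemma comp_pair {k m n : U.C} (δ : k ⟶ m) (γ : m ⟶ n) (a : U.Tm.obj (op m)) :
    δ ≫ U.pair γ a = U.pair (δ ≫ γ) (U.Tm.map δ.op a) := by
  apply U.pair_unique
  · rw [Category.assoc, U.pair_p]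
  · rw [← map_op_map_op, U.pair_q]

lemma pair_p_q (n : U.C) : U.pair (U.p n) (U.q n) = 𝟙 (U.s n) :=
  (U.pair_unique _ _ _ (Category.id_comp _) (by simp)).symm

lemma pair_id_q_comp_sMap_p (n : U.C) :
    U.pair (𝟙 (U.s n)) (U.q n) ≫ U.sMap (U.p n) = 𝟙 (U.s n) := by
  rw [sMap, comp_pair, ← Category.assoc, U.pair_p, Category.id_comp, U.pair_q, pair_p_q]

lemma pair_id_comp_sMap {m n : U.C} (γ : m ⟶ n) (a : U.Tm.obj (op n)) :
    U.pair (𝟙 m) (U.Tm.map γ.op a) ≫ U.sMap γ = γ ≫ U.pair (𝟙 n) a := by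
  rw [sMap, comp_pair, ← Category.assoc, U.pair_p, Category.id_comp, U.pair_q, comp_pair,
    Category.comp_id]

end Ucwf

namespace LamBetaEtaStructure

variable {U : Ucwf} (L : LamBetaEtaStructure U)

lemma ap_map_p_lam_q (n : U.C) (b : U.Tm.obj (op (U.s n))) :
    L.ap (U.s n) (U.Tm.map (U.p n).op (L.lam n b)) (U.q n) = b := by
  rw [L.lam_sub, L.beta, U.map_op_map_op, U.pair_id_q_comp_sMap_p, op_id,
    Functor.map_id_apply]

lemma lam_bijective (n : U.C) : Function.Bijective (L.lam n) :=
  Function.bijective_iff_has_inverse.mpr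
    ⟨fun c => L.ap (U.s n) (U.Tm.map (U.p n).op c) (U.q n), L.ap_map_p_lam_q n, L.eta n⟩

lemma ext_of_lam_eq {L' : LamBetaEtaStructure U} (h : L.lam = L'.lam) : L = L' := by
  have hap : L.ap = L'.ap := by
    funext n c a
    obtain ⟨b, rfl⟩ := (L.lam_bijective n).2 c
    rw [L.beta, congrFun₂ h n b, L'.beta]
  cases L; cases L'; cases h; cases hap; rfl

section OfBijective

variable (lam₀ : ∀ n : U.C, U.Tm.obj (op (U.s n)) → U.Tm.obj (op n))
  (hbij : ∀ n, Function.Bijective (lam₀ n))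
  (hnat : ∀ {m n : U.C} (γ : m ⟶ n) (b : U.Tm.obj (op (U.s n))),
    U.Tm.map γ.op (lam₀ n b) = lam₀ m (U.Tm.map (U.sMap γ).op b))

noncomputable def lamInv (n : U.C) : U.Tm.obj (op n) → U.Tm.obj (op (U.s n)) :=
  (Equiv.ofBijective (lam₀ n) (hbij n)).symm

lemma lam_lamInv (n : U.C) (c : U.Tm.obj (op n)) : lam₀ n (lamInv lam₀ hbij n c) = c :=
  Equiv.ofBijective_apply_symm_apply _ _ c

lemma lamInv_lam (n : U.C) (b : U.Tm.obj (op (U.s n))) : lamInv lam₀ hbij n (lam₀ n b) = b :=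
  Equiv.ofBijective_symm_apply_apply _ _ b

include hnat in
lemma lamInv_map {m n : U.C} (γ : m ⟶ n) (c : U.Tm.obj (op n)) :
    lamInv lam₀ hbij m (U.Tm.map γ.op c) = U.Tm.map (U.sMap γ).op (lamInv lam₀ hbij n c) := by
  apply (hbij m).injective
  rw [← hnat, lam_lamInv lam₀ hbij, lam_lamInv lam₀ hbij]

noncomputable def ofBijective : LamBetaEtaStructure U where
  lam := lam₀
  ap n c a := U.Tm.map (U.pair (𝟙 n) a).op (lamInv lam₀ hbij n c)
  lam_sub := hnat
  ap_sub γ c a := by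
    rw [lamInv_map lam₀ hbij hnat, U.map_op_map_op, U.map_op_map_op, U.pair_id_comp_sMap]
  beta n b a := by rw [lamInv_lam]
  eta n c := by
    rw [lamInv_map lam₀ hbij hnat, U.map_op_map_op, U.pair_id_q_comp_sMap_p, op_id,
      Functor.map_id_apply, lam_lamInv lam₀ hbij]

end OfBijective

end LamBetaEtaStructure

open LamBetaEtaStructure in
/-- λβη-structures on a ucwf `U` correspond exactly to natural
isomorphisms `Tm(s(−)) ≅ Tm(−)`:
(1) the abstraction operator of any λβη-structure is a natural family of
bijections;
(2) given a natural family of bijections `lam₀`, there is a unique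
λβη-structure whose abstraction operator is `lam₀`, and its application is
given by `ap n c a = lam₀⁻¹(c)[⟨id_n, a⟩]`, i.e. `lam₀ n b = c` implies
`ap n c a = b[⟨id_n, a⟩]`. -/
theorem lambda_beta_eta_structures_are_natural_isos (U : Ucwf) :
    (∀ L : LamBetaEtaStructure U,
      (∀ n : U.C, Function.Bijective (L.lam n)) ∧
      (∀ {m n : U.C} (γ : m ⟶ n) (b : U.Tm.obj (op (U.s n))),
        U.Tm.map γ.op (L.lam n b) = L.lam m (U.Tm.map (U.sMap γ).op b))) ∧
    (∀ lam₀ : ∀ n : U.C, U.Tm.obj (op (U.s n)) → U.Tm.obj (op n),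
      (∀ n, Function.Bijective (lam₀ n)) →
      (∀ {m n : U.C} (γ : m ⟶ n) (b : U.Tm.obj (op (U.s n))),
        U.Tm.map γ.op (lam₀ n b) = lam₀ m (U.Tm.map (U.sMap γ).op b)) →
      ∃! L : LamBetaEtaStructure U,
        L.lam = lam₀ ∧
        ∀ (n : U.C) (b : U.Tm.obj (op (U.s n))) (c a : U.Tm.obj (op n)),
          lam₀ n b = c → L.ap n c a = U.Tm.map (U.pair (𝟙 n) a).op b) := by
  refine ⟨fun L => ⟨L.lam_bijective, L.lam_sub⟩, fun lam₀ hbij hnat => ?_⟩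
  let L := ofBijective lam₀ hbij hnat
  refine ⟨L, ⟨rfl, ?_⟩, fun L' ⟨hlam, _⟩ => (L.ext_of_lam_eq hlam.symm).symm⟩
  rintro n b c a rfl
  exact L.beta n b a
end

section
/- Given an scwf C with finite product types, for each context Γ the category Ty(Γ) — with objects the types of C, morphisms from A to B the terms in Tm(Γ·A, B), composition c ∘ b = c[⟨p, b⟩], and identity id = q — is a cartesian category with structure: N₁ is a chosen terminal object, and A × B with projections fst(q_{Γ,A×B}) and snd(q_{Γ,A×B}) is a chosen binary product. -/
open CategoryTheory Opposite

/-- A simply typed category with families (scwf): a category of contexts with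
a terminal object (the empty context), a set of types, a presheaf of terms for
each type, and context comprehension. -/
structure Scwf where
  C : Type
  [cat : Category C]
  unit : C
  emptySub : ∀ Γ : C, Γ ⟶ unit
  empty_unique : ∀ {Γ : C} (f : Γ ⟶ unit), f = emptySub Γ
  Ty : Type
  Tm : Ty → Cᵒᵖ ⥤ Type
  ext : C → Ty → C
  p : ∀ (Γ : C) (A : Ty), ext Γ A ⟶ Γ
  q : ∀ (Γ : C) (A : Ty), (Tm A).obj (op (ext Γ A))
  pair : ∀ {Δ Γ : C} (A : Ty) (_ : Δ ⟶ Γ) (_ : (Tm A).obj (op Δ)), Δ ⟶ ext Γ A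
  pair_p : ∀ {Δ Γ : C} (A : Ty) (γ : Δ ⟶ Γ) (a : (Tm A).obj (op Δ)),
    pair A γ a ≫ p Γ A = γ
  pair_q : ∀ {Δ Γ : C} (A : Ty) (γ : Δ ⟶ Γ) (a : (Tm A).obj (op Δ)),
    (Tm A).map (pair A γ a).op (q Γ A) = a
  pair_unique : ∀ {Δ Γ : C} (A : Ty) (γ : Δ ⟶ Γ) (a : (Tm A).obj (op Δ))
    (δ : Δ ⟶ ext Γ A), δ ≫ p Γ A = γ → (Tm A).map δ.op (q Γ A) = a →
    δ = pair A γ a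

attribute [instance] Scwf.cat

/-- An `N₁`-structure (unit type) on an scwf. -/
structure UnitStructure (S : Scwf) where
  one : S.Ty
  star : ∀ Γ : S.C, (S.Tm one).obj (op Γ)
  star_unique : ∀ {Γ : S.C} (c : (S.Tm one).obj (op Γ)), c = star Γ

/-- A `×`-structure (binary product types) on an scwf. -/
structure ProdStructure (S : Scwf) where
  prod : S.Ty → S.Ty → S.Ty
  fst : ∀ {Γ : S.C} {A B : S.Ty},
    (S.Tm (prod A B)).obj (op Γ) → (S.Tm A).obj (op Γ)
  snd : ∀ {Γ : S.C} {A B : S.Ty},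
    (S.Tm (prod A B)).obj (op Γ) → (S.Tm B).obj (op Γ)
  pairTm : ∀ {Γ : S.C} {A B : S.Ty},
    (S.Tm A).obj (op Γ) → (S.Tm B).obj (op Γ) → (S.Tm (prod A B)).obj (op Γ)
  fst_pair : ∀ {Γ : S.C} {A B : S.Ty} (a : (S.Tm A).obj (op Γ))
    (b : (S.Tm B).obj (op Γ)), fst (pairTm a b) = a
  snd_pair : ∀ {Γ : S.C} {A B : S.Ty} (a : (S.Tm A).obj (op Γ))
    (b : (S.Tm B).obj (op Γ)), snd (pairTm a b) = b
  pair_eta : ∀ {Γ : S.C} {A B : S.Ty} (c : (S.Tm (prod A B)).obj (op Γ)),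
    pairTm (fst c) (snd c) = c
  pair_sub : ∀ {Δ Γ : S.C} {A B : S.Ty} (γ : Δ ⟶ Γ) (a : (S.Tm A).obj (op Γ))
    (b : (S.Tm B).obj (op Γ)),
    (S.Tm (prod A B)).map γ.op (pairTm a b) =
      pairTm ((S.Tm A).map γ.op a) ((S.Tm B).map γ.op b)

/-- A `⇒`-structure (function types) on an scwf. -/
structure ArrStructure (S : Scwf) where
  arr : S.Ty → S.Ty → S.Ty
  lam : ∀ {Γ : S.C} {A B : S.Ty},
    (S.Tm B).obj (op (S.ext Γ A)) → (S.Tm (arr A B)).obj (op Γ)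
  app : ∀ {Γ : S.C} {A B : S.Ty},
    (S.Tm (arr A B)).obj (op Γ) → (S.Tm A).obj (op Γ) → (S.Tm B).obj (op Γ)
  lam_sub : ∀ {Δ Γ : S.C} {A B : S.Ty} (γ : Δ ⟶ Γ)
    (b : (S.Tm B).obj (op (S.ext Γ A))),
    (S.Tm (arr A B)).map γ.op (lam b) =
      lam ((S.Tm B).map (S.pair A (S.p Δ A ≫ γ) (S.q Δ A)).op b)
  app_sub : ∀ {Δ Γ : S.C} {A B : S.Ty} (γ : Δ ⟶ Γ)
    (c : (S.Tm (arr A B)).obj (op Γ)) (a : (S.Tm A).obj (op Γ)),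
    (S.Tm B).map γ.op (app c a) =
      app ((S.Tm (arr A B)).map γ.op c) ((S.Tm A).map γ.op a)
  beta : ∀ {Γ : S.C} {A B : S.Ty} (b : (S.Tm B).obj (op (S.ext Γ A)))
    (a : (S.Tm A).obj (op Γ)),
    app (lam b) a = (S.Tm B).map (S.pair A (𝟙 Γ) a).op b
  eta : ∀ {Γ : S.C} {A B : S.Ty} (c : (S.Tm (arr A B)).obj (op Γ)),
    lam (app ((S.Tm (arr A B)).map (S.p Γ A).op c) (S.q Γ A)) = c

/-- Composition in the category `Ty(Γ)` of types and terms in context `Γ`: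
`c ∘ b = c[⟨p, b⟩]`. -/
def Scwf.tyComp (S : Scwf) (Γ : S.C) {A B C' : S.Ty}
    (b : (S.Tm B).obj (op (S.ext Γ A))) (c : (S.Tm C').obj (op (S.ext Γ B))) :
    (S.Tm C').obj (op (S.ext Γ A)) :=
  (S.Tm C').map (S.pair B (S.p Γ A) b).op c

/-- An scwf is contextual if there is a length function exhibiting every
context as an iterated comprehension `1·A₁·…·Aₙ`. -/
def Scwf.Contextual (S : Scwf) : Prop :=
  ∃ l : S.C → ℕ,
    (∀ Γ, l Γ = 0 ↔ Γ = S.unit) ∧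
    (∀ Γ n, l Γ = n + 1 ↔
      ∃! ΔA : S.C × S.Ty, Γ = S.ext ΔA.1 ΔA.2 ∧ l ΔA.1 = n)

/-! The projections of `Ty(Γ)` act on a morphism `h` as `fst (q)[⟨p, h⟩] = fst h`, because
`fst` and `snd` commute with substitution (a consequence of surjective pairing). The universal
property of `A × B` is therefore just surjective pairing, and terminality of `N₁` is the
uniqueness of its terms. -/

namespace ProdStructure

variable {S : Scwf} (P : ProdStructure S)

theorem fst_map {Δ Γ : S.C} {A B : S.Ty} (γ : Δ ⟶ Γ) (c : (S.Tm (P.prod A B)).obj (op Γ)) :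
    P.fst ((S.Tm (P.prod A B)).map γ.op c) = (S.Tm A).map γ.op (P.fst c) := by
  conv_lhs => rw [← P.pair_eta c, P.pair_sub, P.fst_pair]

theorem snd_map {Δ Γ : S.C} {A B : S.Ty} (γ : Δ ⟶ Γ) (c : (S.Tm (P.prod A B)).obj (op Γ)) :
    P.snd ((S.Tm (P.prod A B)).map γ.op c) = (S.Tm B).map γ.op (P.snd c) := by
  conv_lhs => rw [← P.pair_eta c, P.pair_sub, P.snd_pair]

theorem existsUnique_fst_snd_eq {Γ : S.C} {A B : S.Ty} (a : (S.Tm A).obj (op Γ))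
    (b : (S.Tm B).obj (op Γ)) :
    ∃! c : (S.Tm (P.prod A B)).obj (op Γ), P.fst c = a ∧ P.snd c = b :=
  ⟨P.pairTm a b, ⟨P.fst_pair a b, P.snd_pair a b⟩, by
    rintro c ⟨rfl, rfl⟩
    exact (P.pair_eta c).symm⟩

end ProdStructure

namespace Scwf

variable (S : Scwf) (P : ProdStructure S) {Γ : S.C} {A B X : S.Ty}

theorem tyComp_fst_q (h : (S.Tm (P.prod A B)).obj (op (S.ext Γ X))) :
    S.tyComp Γ h (P.fst (S.q Γ (P.prod A B))) = P.fst h := by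
  rw [tyComp, ← P.fst_map, S.pair_q]

theorem tyComp_snd_q (h : (S.Tm (P.prod A B)).obj (op (S.ext Γ X))) :
    S.tyComp Γ h (P.snd (S.q Γ (P.prod A B))) = P.snd h := by
  rw [tyComp, ← P.snd_map, S.pair_q]

end Scwf

/-- for an scwf with finite product types (an `N₁`-structure and
a `×`-structure), the category `Ty(Γ)` of types and terms in context `Γ`
(with morphisms `A ⟶ B` the terms in `Tm(Γ·A, B)`, composition
`c ∘ b = c[⟨p, b⟩]` and identity `q`) is a cartesian category with structure:
`N₁` is a chosen terminal object, and `A × B` with projections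
`fst(q_{Γ,A×B})` and `snd(q_{Γ,A×B})` is a chosen binary product. -/
theorem tyCategory_cartesian (S : Scwf) (U : UnitStructure S)
    (P : ProdStructure S) (Γ : S.C) :
    (∀ A : S.Ty, ∃! _h : (S.Tm U.one).obj (op (S.ext Γ A)), True) ∧
    (∀ (A B X : S.Ty) (f : (S.Tm A).obj (op (S.ext Γ X)))
       (g : (S.Tm B).obj (op (S.ext Γ X))),
      ∃! h : (S.Tm (P.prod A B)).obj (op (S.ext Γ X)),
        S.tyComp Γ h (P.fst (S.q Γ (P.prod A B))) = f ∧
        S.tyComp Γ h (P.snd (S.q Γ (P.prod A B))) = g) := by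
  refine ⟨fun A => ⟨U.star _, trivial, fun c _ => U.star_unique c⟩, fun A B X f g => ?_⟩
  simpa only [S.tyComp_fst_q, S.tyComp_snd_q] using P.existsUnique_fst_snd_eq f g
end

section
/- If C is a democratic scwf, then its base category has finite products: the product of contexts Γ and Δ may be given by Γ · Δ̄, the comprehension of Γ by the type representing Δ, with projections p_{Γ, Δ̄} and the composite γ_Δ^{-1} ∘ ⟨⟨⟩, q⟩ (the map induced by q and democracy). -/
open CategoryTheory Opposite

/-- A democratic scwf: each context `Γ` is represented by a type `Γ̄` via an
isomorphism `γ_Γ : Γ ≅ 1·Γ̄`. -/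
structure DemScwf where
  S : Scwf
  bar : S.C → S.Ty
  demIso : ∀ Γ : S.C, Γ ≅ S.ext S.unit (bar Γ)

/-!
Comprehension gives natural bijections `Hom(X, Γ·A) ≃ Hom(X, Γ) × Tm_A(X)` and, since `1` is
terminal, `Hom(X, 1·A) ≃ Tm_A(X)`. Democracy turns `Hom(X, 1·Δ̄)` into `Hom(X, Δ)`, so
`Hom(X, Γ·Δ̄) ≃ Hom(X, Γ) × Hom(X, Δ)`; this composite sends `h` to `(p ∘ h, γ_Δ⁻¹ ∘ ⟨⟨⟩, q⟩ ∘ h)`.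
-/

namespace Scwf

variable (S : Scwf)

instance {X : S.C} : Unique (X ⟶ S.unit) where
  default := S.emptySub X
  uniq := S.empty_unique

def extHomEquiv {X Γ : S.C} (A : S.Ty) :
    (X ⟶ S.ext Γ A) ≃ (X ⟶ Γ) × (S.Tm A).obj (op X) where
  toFun δ := (δ ≫ S.p Γ A, (S.Tm A).map δ.op (S.q Γ A))
  invFun x := S.pair A x.1 x.2
  left_inv δ := (S.pair_unique A _ _ δ rfl rfl).symm
  right_inv x := Prod.ext (S.pair_p A x.1 x.2) (S.pair_q A x.1 x.2)

def unitExtHomEquiv {X : S.C} (A : S.Ty) : (X ⟶ S.ext S.unit A) ≃ (S.Tm A).obj (op X) :=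
  (S.extHomEquiv A).trans (Equiv.uniqueProd _ _)

lemma comp_pair {X Δ Γ : S.C} (A : S.Ty) (f : X ⟶ Δ) (γ : Δ ⟶ Γ)
    (a : (S.Tm A).obj (op Δ)) :
    f ≫ S.pair A γ a = S.pair A (f ≫ γ) ((S.Tm A).map f.op a) := by
  apply S.pair_unique
  · rw [Category.assoc, S.pair_p]
  · rw [op_comp, Functor.map_comp_apply, S.pair_q]

end Scwf

namespace DemScwf

variable (D : DemScwf)

def snd (Γ Δ : D.S.C) : D.S.ext Γ (D.bar Δ) ⟶ Δ :=
  D.S.pair (D.bar Δ) (D.S.emptySub _) (D.S.q Γ (D.bar Δ)) ≫ (D.demIso Δ).inv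

def prodHomEquiv {X : D.S.C} (Γ Δ : D.S.C) :
    (X ⟶ D.S.ext Γ (D.bar Δ)) ≃ (X ⟶ Γ) × (X ⟶ Δ) :=
  (D.S.extHomEquiv (D.bar Δ)).trans <| Equiv.prodCongr (Equiv.refl _) <|
    (D.S.unitExtHomEquiv (D.bar Δ)).symm.trans (D.demIso Δ).symm.homToEquiv

lemma prodHomEquiv_apply {X : D.S.C} (Γ Δ : D.S.C) (h : X ⟶ D.S.ext Γ (D.bar Δ)) :
    D.prodHomEquiv Γ Δ h = (h ≫ D.S.p Γ (D.bar Δ), h ≫ D.snd Γ Δ) := by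
  refine Prod.ext rfl ?_
  change D.S.pair _ (D.S.emptySub X) _ ≫ (D.demIso Δ).inv = _
  rw [snd, ← Category.assoc, D.S.comp_pair]
  congr 2
  exact Subsingleton.elim _ _

end DemScwf

/-- the base category of a democratic scwf has finite
products: the product of contexts `Γ` and `Δ` may be given by the
comprehension `Γ · Δ̄`, with first projection `p_{Γ,Δ̄}` and second projection
the composite `γ_Δ⁻¹ ∘ ⟨⟨⟩, q⟩`. -/
theorem demscwf_base_has_products (D : DemScwf) (Γ Δ : D.S.C) :
    ∀ (X : D.S.C) (f : X ⟶ Γ) (g : X ⟶ Δ),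
      ∃! h : X ⟶ D.S.ext Γ (D.bar Δ),
        h ≫ D.S.p Γ (D.bar Δ) = f ∧
        h ≫ (D.S.pair (D.bar Δ) (D.S.emptySub (D.S.ext Γ (D.bar Δ)))
              (D.S.q Γ (D.bar Δ)) ≫ (D.demIso Δ).inv) = g := by
  intro X f g
  simpa only [DemScwf.prodHomEquiv_apply, DemScwf.snd, Prod.mk.injEq] using
    (D.prodHomEquiv Γ Δ).bijective.existsUnique (f, g)
end

section
/- A contextual cwf equipped with an N₁-structure and a Σ-structure is democratic: every context 1·A_1·...·A_n is represented (up to isomorphism with its comprehension over 1) by the iterated Σ-type Σ(A_1, Σ(A_2, ..., Σ(A_{n-1}, A_n)...)) ∈ Ty(1), and the empty context by N₁. -/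
open CategoryTheory Opposite

/-- A category with families (cwf): a category of contexts with a terminal
object, presheaves of types and (dependent) terms with substitution, and
context comprehension. -/
structure Cwf where
  C : Type
  [cat : Category C]
  unit : C
  emptySub : ∀ Γ : C, Γ ⟶ unit
  empty_unique : ∀ {Γ : C} (f : Γ ⟶ unit), f = emptySub Γ
  Ty : C → Type
  Tm : ∀ Γ : C, Ty Γ → Type
  tySub : ∀ {Δ Γ : C}, Ty Γ → (Δ ⟶ Γ) → Ty Δ
  tmSub : ∀ {Δ Γ : C} {A : Ty Γ}, Tm Γ A → ∀ γ : Δ ⟶ Γ, Tm Δ (tySub A γ)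
  tySub_id : ∀ {Γ : C} (A : Ty Γ), tySub A (𝟙 Γ) = A
  tySub_comp : ∀ {Θ Δ Γ : C} (A : Ty Γ) (γ : Δ ⟶ Γ) (δ : Θ ⟶ Δ),
    tySub A (δ ≫ γ) = tySub (tySub A γ) δ
  tmSub_id : ∀ {Γ : C} {A : Ty Γ} (a : Tm Γ A), HEq (tmSub a (𝟙 Γ)) a
  tmSub_comp : ∀ {Θ Δ Γ : C} {A : Ty Γ} (a : Tm Γ A) (γ : Δ ⟶ Γ)
    (δ : Θ ⟶ Δ), HEq (tmSub a (δ ≫ γ)) (tmSub (tmSub a γ) δ)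
  ext : ∀ Γ : C, Ty Γ → C
  p : ∀ (Γ : C) (A : Ty Γ), ext Γ A ⟶ Γ
  q : ∀ (Γ : C) (A : Ty Γ), Tm (ext Γ A) (tySub A (p Γ A))
  pair : ∀ {Δ Γ : C} (A : Ty Γ) (γ : Δ ⟶ Γ), Tm Δ (tySub A γ) → (Δ ⟶ ext Γ A)
  pair_p : ∀ {Δ Γ : C} (A : Ty Γ) (γ : Δ ⟶ Γ) (a : Tm Δ (tySub A γ)),
    pair A γ a ≫ p Γ A = γ
  pair_q : ∀ {Δ Γ : C} (A : Ty Γ) (γ : Δ ⟶ Γ) (a : Tm Δ (tySub A γ)),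
    HEq (tmSub (q Γ A) (pair A γ a)) a
  pair_unique : ∀ {Δ Γ : C} (A : Ty Γ) (γ : Δ ⟶ Γ) (a : Tm Δ (tySub A γ))
    (δ : Δ ⟶ ext Γ A), δ ≫ p Γ A = γ → HEq (tmSub (q Γ A) δ) a →
    δ = pair A γ a

attribute [instance] Cwf.cat

/-- Transport of terms along an equality of types. -/
def Cwf.tmCast (S : Cwf) {Γ : S.C} {A B : S.Ty Γ} (h : A = B)
    (a : S.Tm Γ A) : S.Tm Γ B :=
  h ▸ a

/-- The weakening map `⟨γ ∘ p, q⟩ : Δ·A[γ] ⟶ Γ·A`. -/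
def Cwf.wk (S : Cwf) {Δ Γ : S.C} (γ : Δ ⟶ Γ) (A : S.Ty Γ) :
    S.ext Δ (S.tySub A γ) ⟶ S.ext Γ A :=
  S.pair A (S.p Δ (S.tySub A γ) ≫ γ)
    (S.tmCast (S.tySub_comp A γ (S.p Δ (S.tySub A γ))).symm
      (S.q Δ (S.tySub A γ)))

/-- The section `⟨id, a⟩ : Γ ⟶ Γ·A` of the display map induced by a term. -/
def Cwf.sec (S : Cwf) {Γ : S.C} {A : S.Ty Γ} (a : S.Tm Γ A) :
    Γ ⟶ S.ext Γ A :=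
  S.pair A (𝟙 Γ) (S.tmCast (S.tySub_id A).symm a)

/-- A Σ-structure (dependent sum types) on a cwf. -/
structure SigmaStructure (S : Cwf) where
  Sig : ∀ {Γ : S.C} (A : S.Ty Γ), S.Ty (S.ext Γ A) → S.Ty Γ
  Sig_sub : ∀ {Δ Γ : S.C} (A : S.Ty Γ) (B : S.Ty (S.ext Γ A)) (γ : Δ ⟶ Γ),
    S.tySub (Sig A B) γ = Sig (S.tySub A γ) (S.tySub B (S.wk γ A))
  sfst : ∀ {Γ : S.C} {A : S.Ty Γ} {B : S.Ty (S.ext Γ A)},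
    S.Tm Γ (Sig A B) → S.Tm Γ A
  ssnd : ∀ {Γ : S.C} {A : S.Ty Γ} {B : S.Ty (S.ext Γ A)}
    (c : S.Tm Γ (Sig A B)), S.Tm Γ (S.tySub B (S.sec (sfst c)))
  spair : ∀ {Γ : S.C} {A : S.Ty Γ} {B : S.Ty (S.ext Γ A)} (a : S.Tm Γ A),
    S.Tm Γ (S.tySub B (S.sec a)) → S.Tm Γ (Sig A B)
  fst_pair : ∀ {Γ : S.C} {A : S.Ty Γ} {B : S.Ty (S.ext Γ A)} (a : S.Tm Γ A)
    (b : S.Tm Γ (S.tySub B (S.sec a))), sfst (spair (B := B) a b) = a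
  snd_pair : ∀ {Γ : S.C} {A : S.Ty Γ} {B : S.Ty (S.ext Γ A)} (a : S.Tm Γ A)
    (b : S.Tm Γ (S.tySub B (S.sec a))), HEq (ssnd (spair (B := B) a b)) b
  pair_eta : ∀ {Γ : S.C} {A : S.Ty Γ} {B : S.Ty (S.ext Γ A)}
    (c : S.Tm Γ (Sig A B)), spair (sfst c) (ssnd c) = c
  spair_sub : ∀ {Δ Γ : S.C} {A : S.Ty Γ} {B : S.Ty (S.ext Γ A)}
    (a : S.Tm Γ A) (b : S.Tm Γ (S.tySub B (S.sec a))) (γ : Δ ⟶ Γ)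
    (b' : S.Tm Δ (S.tySub (S.tySub B (S.wk γ A)) (S.sec (S.tmSub a γ)))),
    HEq b' (S.tmSub b γ) →
    HEq (S.tmSub (spair (B := B) a b) γ)
        (spair (B := S.tySub B (S.wk γ A)) (S.tmSub a γ) b')

/-- An `N₁`-structure (unit type) on a cwf, stable under substitution. -/
structure UnitTyStructure (S : Cwf) where
  one : ∀ Γ : S.C, S.Ty Γ
  one_sub : ∀ {Δ Γ : S.C} (γ : Δ ⟶ Γ), S.tySub (one Γ) γ = one Δ
  star : ∀ Γ : S.C, S.Tm Γ (one Γ)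
  star_unique : ∀ {Γ : S.C} (c : S.Tm Γ (one Γ)), c = star Γ

/-- A cwf is contextual if there is a length function exhibiting every
context as an iterated comprehension of the empty context. -/
def Cwf.Contextual (S : Cwf) : Prop :=
  ∃ l : S.C → ℕ,
    (∀ Γ, l Γ = 0 ↔ Γ = S.unit) ∧
    (∀ Γ n, l Γ = n + 1 ↔
      ∃! ΔA : Σ Δ : S.C, S.Ty Δ, Γ = S.ext ΔA.1 ΔA.2 ∧ l ΔA.1 = n)

/-- A cwf is democratic if every context is represented by a closed type, up
to isomorphism with its comprehension over the empty context. -/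
def Cwf.Democratic (S : Cwf) : Prop :=
  ∃ bar : S.C → S.Ty S.unit, ∀ Γ : S.C, Nonempty (Γ ≅ S.ext S.unit (bar Γ))

/-! The comprehension `Γ·Σ(A,B)` is isomorphic to `Γ·A·B`: both represent pairs of a term of
`A` and a term of `B` over it, so the Σ-type of a context `1·A₁·…·Aₙ` is assembled one
comprehension at a time by induction on the length, starting from `1 ≅ 1·N₁`. -/

namespace Cwf

variable (S : Cwf)

theorem tmCast_heq {Γ : S.C} {A B : S.Ty Γ} (h : A = B) (a : S.Tm Γ A) :
    HEq (S.tmCast h a) a := by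
  subst h; rfl

theorem tmSub_congr {Δ Γ : S.C} {A B : S.Ty Γ} (h : A = B)
    {a : S.Tm Γ A} {b : S.Tm Γ B} (hab : HEq a b) (γ : Δ ⟶ Γ) :
    HEq (S.tmSub a γ) (S.tmSub b γ) := by
  subst h; cases hab; rfl

theorem tySub_congr_heq {Θ₁ Θ₂ Γ : S.C} (h : Θ₁ = Θ₂) (B : S.Ty Γ)
    {f₁ : Θ₁ ⟶ Γ} {f₂ : Θ₂ ⟶ Γ} (hf : HEq f₁ f₂) :
    HEq (S.tySub B f₁) (S.tySub B f₂) := by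
  subst h; cases hf; rfl

theorem ext_hom_ext {Δ Γ : S.C} {A : S.Ty Γ} {δ₁ δ₂ : Δ ⟶ S.ext Γ A}
    (hp : δ₁ ≫ S.p Γ A = δ₂ ≫ S.p Γ A)
    (hq : HEq (S.tmSub (S.q Γ A) δ₁) (S.tmSub (S.q Γ A) δ₂)) : δ₁ = δ₂ := by
  let a := S.tmCast (S.tySub_comp A (S.p Γ A) δ₂).symm (S.tmSub (S.q Γ A) δ₂)
  rw [S.pair_unique A _ a δ₁ hp (hq.trans (S.tmCast_heq _ _).symm),
    ← S.pair_unique A _ a δ₂ rfl (S.tmCast_heq _ _).symm]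

/-- `⟨γ ∘ p, q⟩ : Δ·B ⟶ Γ·A` for any `B` propositionally equal to `A[γ]`; unlike `wk` it
can be composed without transporting along `A[γ][δ] = A[γ ∘ δ]`. -/
def extMap {Δ Γ : S.C} (γ : Δ ⟶ Γ) (A : S.Ty Γ) (B : S.Ty Δ)
    (h : B = S.tySub A γ) : S.ext Δ B ⟶ S.ext Γ A :=
  S.pair A (S.p Δ B ≫ γ) (S.tmCast (by rw [h, ← S.tySub_comp]) (S.q Δ B))

theorem extMap_p {Δ Γ : S.C} (γ : Δ ⟶ Γ) (A : S.Ty Γ) (B : S.Ty Δ)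
    (h : B = S.tySub A γ) : S.extMap γ A B h ≫ S.p Γ A = S.p Δ B ≫ γ :=
  S.pair_p _ _ _

theorem extMap_q {Δ Γ : S.C} (γ : Δ ⟶ Γ) (A : S.Ty Γ) (B : S.Ty Δ)
    (h : B = S.tySub A γ) : HEq (S.tmSub (S.q Γ A) (S.extMap γ A B h)) (S.q Δ B) :=
  (S.pair_q _ _ _).trans (S.tmCast_heq _ _)

theorem extMap_comp {Θ Δ Γ : S.C} (γ₁ : Θ ⟶ Δ) (γ₂ : Δ ⟶ Γ)
    (A : S.Ty Γ) (B : S.Ty Δ) (C : S.Ty Θ)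
    (h₁ : C = S.tySub B γ₁) (h₂ : B = S.tySub A γ₂) :
    S.extMap γ₁ B C h₁ ≫ S.extMap γ₂ A B h₂ =
      S.extMap (γ₁ ≫ γ₂) A C (by rw [h₁, h₂, ← S.tySub_comp]) := by
  apply S.ext_hom_ext
  · rw [Category.assoc, S.extMap_p, ← Category.assoc, S.extMap_p, S.extMap_p, Category.assoc]
  · refine (S.tmSub_comp _ _ _).trans (HEq.trans ?_ (S.extMap_q _ _ _ _).symm)
    refine HEq.trans ?_ (S.extMap_q γ₁ B C h₁)
    exact S.tmSub_congr (by rw [← S.tySub_comp, S.extMap_p, S.tySub_comp, h₂])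
      (S.extMap_q γ₂ A B h₂) _

theorem extMap_id {Γ : S.C} (A : S.Ty Γ) (h : A = S.tySub A (𝟙 Γ)) :
    S.extMap (𝟙 Γ) A A h = 𝟙 (S.ext Γ A) := by
  apply S.ext_hom_ext
  · rw [S.extMap_p, Category.comp_id, Category.id_comp]
  · exact (S.extMap_q _ _ _ _).trans (S.tmSub_id _).symm

theorem extMap_congr {Δ Γ : S.C} {γ₁ γ₂ : Δ ⟶ Γ} (hγ : γ₁ = γ₂)
    (A : S.Ty Γ) (B : S.Ty Δ) (h₁ : B = S.tySub A γ₁) (h₂ : B = S.tySub A γ₂) :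
    S.extMap γ₁ A B h₁ = S.extMap γ₂ A B h₂ := by
  subst hγ; rfl

theorem extMap_congr_heq {Δ Γ : S.C} (γ : Δ ⟶ Γ) (A : S.Ty Γ)
    {B₁ B₂ : S.Ty Δ} (hB : B₁ = B₂) (h₁ : B₁ = S.tySub A γ)
    (h₂ : B₂ = S.tySub A γ) :
    HEq (S.extMap γ A B₁ h₁) (S.extMap γ A B₂ h₂) := by
  subst hB; rfl

def extIso {Δ Γ : S.C} (φ : Δ ≅ Γ) (A : S.Ty Γ) (B : S.Ty Δ)
    (h : B = S.tySub A φ.hom) : S.ext Δ B ≅ S.ext Γ A where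
  hom := S.extMap φ.hom A B h
  inv := S.extMap φ.inv B A (by rw [h, ← S.tySub_comp, φ.inv_hom_id, S.tySub_id])
  hom_inv_id := by
    rw [S.extMap_comp, S.extMap_congr φ.hom_inv_id B B _ (S.tySub_id B).symm, S.extMap_id]
  inv_hom_id := by
    rw [S.extMap_comp, S.extMap_congr φ.inv_hom_id A A _ (S.tySub_id A).symm, S.extMap_id]

theorem wk_p {Δ Γ : S.C} (γ : Δ ⟶ Γ) (A : S.Ty Γ) :
    S.wk γ A ≫ S.p Γ A = S.p Δ (S.tySub A γ) ≫ γ :=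
  S.pair_p _ _ _

theorem wk_q {Δ Γ : S.C} (γ : Δ ⟶ Γ) (A : S.Ty Γ) :
    HEq (S.tmSub (S.q Γ A) (S.wk γ A)) (S.q Δ (S.tySub A γ)) :=
  (S.pair_q _ _ _).trans (S.tmCast_heq _ _)

theorem wk_comp_wk {Θ Δ Γ : S.C} (δ : Θ ⟶ Δ) (γ : Δ ⟶ Γ) (A : S.Ty Γ) :
    S.wk δ (S.tySub A γ) ≫ S.wk γ A =
      S.extMap (δ ≫ γ) A (S.tySub (S.tySub A γ) δ) (by rw [← S.tySub_comp]) :=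
  S.extMap_comp δ γ A _ _ rfl rfl

theorem sec_p {Γ : S.C} {A : S.Ty Γ} (a : S.Tm Γ A) : S.sec a ≫ S.p Γ A = 𝟙 Γ :=
  S.pair_p _ _ _

theorem sec_q {Γ : S.C} {A : S.Ty Γ} (a : S.Tm Γ A) :
    HEq (S.tmSub (S.q Γ A) (S.sec a)) a :=
  (S.pair_q _ _ _).trans (S.tmCast_heq _ _)

theorem sec_wk {Δ Γ : S.C} (γ : Δ ⟶ Γ) (A : S.Ty Γ) (a : S.Tm Δ (S.tySub A γ)) :
    S.sec a ≫ S.wk γ A = S.pair A γ a := by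
  refine S.pair_unique _ _ _ _ ?_ ?_
  · rw [Category.assoc, S.wk_p, ← Category.assoc, S.sec_p, Category.id_comp]
  · refine (S.tmSub_comp _ _ _).trans (HEq.trans ?_ (S.sec_q a))
    exact S.tmSub_congr (by rw [← S.tySub_comp, S.wk_p, S.tySub_comp]) (S.wk_q γ A) _

theorem comp_sec {Δ Γ : S.C} (γ : Δ ⟶ Γ) {A : S.Ty Γ} (a : S.Tm Γ A) :
    γ ≫ S.sec a = S.sec (S.tmSub a γ) ≫ S.wk γ A := by
  rw [S.sec_wk]
  refine S.pair_unique _ _ _ _ ?_ ?_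
  · rw [Category.assoc, S.sec_p, Category.comp_id]
  · exact (S.tmSub_comp _ _ _).trans
      (S.tmSub_congr (by rw [← S.tySub_comp, S.sec_p, S.tySub_id]) (S.sec_q a) γ)

theorem tySub_sec_tySub {Δ Γ : S.C} (γ : Δ ⟶ Γ) {A : S.Ty Γ} (a : S.Tm Γ A)
    (B : S.Ty (S.ext Γ A)) :
    S.tySub (S.tySub B (S.sec a)) γ =
      S.tySub (S.tySub B (S.wk γ A)) (S.sec (S.tmSub a γ)) := by
  rw [← S.tySub_comp, S.comp_sec, S.tySub_comp]

theorem tySub_wk_wk {E Δ Γ : S.C} (f : E ⟶ Δ) {γ : Δ ⟶ Γ} {δ : E ⟶ Γ}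
    (h : f ≫ γ = δ) (A : S.Ty Γ) (B : S.Ty (S.ext Γ A)) :
    HEq (S.tySub (S.tySub B (S.wk γ A)) (S.wk f (S.tySub A γ))) (S.tySub B (S.wk δ A)) := by
  subst h
  refine (heq_of_eq (S.tySub_comp B _ _).symm).trans
    (S.tySub_congr_heq (by rw [← S.tySub_comp]) B ?_)
  rw [S.wk_comp_wk]
  exact S.extMap_congr_heq _ _ (S.tySub_comp A γ f).symm _ rfl

section Sigma

variable (Sg : SigmaStructure S)

theorem sfst_congr {Γ : S.C} {A₁ A₂ : S.Ty Γ} (hA : A₁ = A₂)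
    {B₁ : S.Ty (S.ext Γ A₁)} {B₂ : S.Ty (S.ext Γ A₂)} (hB : HEq B₁ B₂)
    {c₁ : S.Tm Γ (Sg.Sig A₁ B₁)} {c₂ : S.Tm Γ (Sg.Sig A₂ B₂)}
    (hc : HEq c₁ c₂) : HEq (Sg.sfst c₁) (Sg.sfst c₂) := by
  subst hA; cases hB; cases hc; rfl

theorem ssnd_congr {Γ : S.C} {A₁ A₂ : S.Ty Γ} (hA : A₁ = A₂)
    {B₁ : S.Ty (S.ext Γ A₁)} {B₂ : S.Ty (S.ext Γ A₂)} (hB : HEq B₁ B₂)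
    {c₁ : S.Tm Γ (Sg.Sig A₁ B₁)} {c₂ : S.Tm Γ (Sg.Sig A₂ B₂)}
    (hc : HEq c₁ c₂) : HEq (Sg.ssnd c₁) (Sg.ssnd c₂) := by
  subst hA; cases hB; cases hc; rfl

theorem spair_congr {Γ : S.C} {A₁ A₂ : S.Ty Γ} (hA : A₁ = A₂)
    {B₁ : S.Ty (S.ext Γ A₁)} {B₂ : S.Ty (S.ext Γ A₂)} (hB : HEq B₁ B₂)
    {a₁ : S.Tm Γ A₁} {a₂ : S.Tm Γ A₂} (ha : HEq a₁ a₂)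
    {b₁ : S.Tm Γ (S.tySub B₁ (S.sec a₁))} {b₂ : S.Tm Γ (S.tySub B₂ (S.sec a₂))}
    (hb : HEq b₁ b₂) :
    HEq (Sg.spair (B := B₁) a₁ b₁) (Sg.spair (B := B₂) a₂ b₂) := by
  subst hA; cases hB; cases ha; cases hb; rfl

theorem tmSub_eq_spair {Δ Γ : S.C} {A : S.Ty Γ} {B : S.Ty (S.ext Γ A)}
    (c : S.Tm Γ (Sg.Sig A B)) (γ : Δ ⟶ Γ) :
    S.tmCast (Sg.Sig_sub A B γ) (S.tmSub c γ) =
      Sg.spair (B := S.tySub B (S.wk γ A)) (S.tmSub (Sg.sfst c) γ)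
        (S.tmCast (S.tySub_sec_tySub γ (Sg.sfst c) B) (S.tmSub (Sg.ssnd c) γ)) := by
  have h := Sg.spair_sub (Sg.sfst c) (Sg.ssnd c) γ
    (S.tmCast (S.tySub_sec_tySub γ (Sg.sfst c) B) (S.tmSub (Sg.ssnd c) γ)) (S.tmCast_heq _ _)
  rw [Sg.pair_eta] at h
  exact eq_of_heq ((S.tmCast_heq _ _).trans h)

theorem sfst_tmSub {Δ Γ : S.C} {A : S.Ty Γ} {B : S.Ty (S.ext Γ A)}
    (c : S.Tm Γ (Sg.Sig A B)) (γ : Δ ⟶ Γ) :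
    Sg.sfst (S.tmCast (Sg.Sig_sub A B γ) (S.tmSub c γ)) = S.tmSub (Sg.sfst c) γ := by
  rw [S.tmSub_eq_spair Sg, Sg.fst_pair]

theorem ssnd_tmSub {Δ Γ : S.C} {A : S.Ty Γ} {B : S.Ty (S.ext Γ A)}
    (c : S.Tm Γ (Sg.Sig A B)) (γ : Δ ⟶ Γ) :
    HEq (Sg.ssnd (S.tmCast (Sg.Sig_sub A B γ) (S.tmSub c γ))) (S.tmSub (Sg.ssnd c) γ) := by
  rw [S.tmSub_eq_spair Sg]
  exact (Sg.snd_pair _ _).trans (S.tmCast_heq _ _)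

variable {Γ : S.C} (A : S.Ty Γ) (B : S.Ty (S.ext Γ A))

def sigmaVar : S.Tm (S.ext Γ (Sg.Sig A B))
    (Sg.Sig (S.tySub A (S.p Γ (Sg.Sig A B))) (S.tySub B (S.wk (S.p Γ (Sg.Sig A B)) A))) :=
  S.tmCast (Sg.Sig_sub A B (S.p Γ (Sg.Sig A B))) (S.q Γ (Sg.Sig A B))

def sigmaFstMap : S.ext Γ (Sg.Sig A B) ⟶ S.ext Γ A :=
  S.pair A (S.p Γ (Sg.Sig A B)) (Sg.sfst (S.sigmaVar Sg A B))

theorem sigmaFstMap_eq :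
    S.sigmaFstMap Sg A B = S.sec (Sg.sfst (S.sigmaVar Sg A B)) ≫ S.wk (S.p Γ (Sg.Sig A B)) A :=
  (S.sec_wk _ _ _).symm

theorem sigmaFstMap_p : S.sigmaFstMap Sg A B ≫ S.p Γ A = S.p Γ (Sg.Sig A B) :=
  S.pair_p _ _ _

theorem sigmaFstMap_q :
    HEq (S.tmSub (S.q Γ A) (S.sigmaFstMap Sg A B)) (Sg.sfst (S.sigmaVar Sg A B)) :=
  S.pair_q _ _ _

def sigmaUnpair : S.ext Γ (Sg.Sig A B) ⟶ S.ext (S.ext Γ A) B :=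
  S.pair B (S.sigmaFstMap Sg A B)
    (S.tmCast (by rw [S.sigmaFstMap_eq, S.tySub_comp]) (Sg.ssnd (S.sigmaVar Sg A B)))

theorem sigmaUnpair_p : S.sigmaUnpair Sg A B ≫ S.p (S.ext Γ A) B = S.sigmaFstMap Sg A B :=
  S.pair_p _ _ _

theorem sigmaUnpair_q :
    HEq (S.tmSub (S.q (S.ext Γ A) B) (S.sigmaUnpair Sg A B)) (Sg.ssnd (S.sigmaVar Sg A B)) :=
  (S.pair_q _ _ _).trans (S.tmCast_heq _ _)

theorem sigmaUnpair_p_p :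
    S.sigmaUnpair Sg A B ≫ S.p (S.ext Γ A) B ≫ S.p Γ A = S.p Γ (Sg.Sig A B) := by
  rw [← Category.assoc, S.sigmaUnpair_p, S.sigmaFstMap_p]

def fstVar : S.Tm (S.ext (S.ext Γ A) B) (S.tySub A (S.p (S.ext Γ A) B ≫ S.p Γ A)) :=
  S.tmCast (S.tySub_comp A (S.p Γ A) (S.p (S.ext Γ A) B)).symm
    (S.tmSub (S.q Γ A) (S.p (S.ext Γ A) B))

theorem p_eq_pair_fstVar :
    S.p (S.ext Γ A) B = S.pair A (S.p (S.ext Γ A) B ≫ S.p Γ A) (S.fstVar A B) :=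
  S.pair_unique _ _ _ _ rfl (S.tmCast_heq _ _).symm

def sndVar : S.Tm (S.ext (S.ext Γ A) B)
    (S.tySub (S.tySub B (S.wk (S.p (S.ext Γ A) B ≫ S.p Γ A) A)) (S.sec (S.fstVar A B))) :=
  S.tmCast (by rw [← S.tySub_comp, S.sec_wk, ← S.p_eq_pair_fstVar]) (S.q (S.ext Γ A) B)

def varPair : S.Tm (S.ext (S.ext Γ A) B)
    (Sg.Sig (S.tySub A (S.p (S.ext Γ A) B ≫ S.p Γ A))
      (S.tySub B (S.wk (S.p (S.ext Γ A) B ≫ S.p Γ A) A))) :=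
  Sg.spair (S.fstVar A B) (S.sndVar A B)

def sigmaPairMap : S.ext (S.ext Γ A) B ⟶ S.ext Γ (Sg.Sig A B) :=
  S.pair (Sg.Sig A B) (S.p (S.ext Γ A) B ≫ S.p Γ A)
    (S.tmCast (Sg.Sig_sub A B _).symm (S.varPair Sg A B))

theorem sigmaPairMap_p :
    S.sigmaPairMap Sg A B ≫ S.p Γ (Sg.Sig A B) = S.p (S.ext Γ A) B ≫ S.p Γ A :=
  S.pair_p _ _ _

theorem sigmaPairMap_q :
    HEq (S.tmSub (S.q Γ (Sg.Sig A B)) (S.sigmaPairMap Sg A B)) (S.varPair Sg A B) :=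
  (S.pair_q _ _ _).trans (S.tmCast_heq _ _)

theorem sigmaVar_tmSub_sigmaPairMap :
    HEq (S.tmCast (Sg.Sig_sub _ _ (S.sigmaPairMap Sg A B))
        (S.tmSub (S.sigmaVar Sg A B) (S.sigmaPairMap Sg A B)))
      (S.varPair Sg A B) :=
  (S.tmCast_heq _ _).trans
    ((S.tmSub_congr (Sg.Sig_sub A B _).symm (S.tmCast_heq _ _) _).trans
      (S.sigmaPairMap_q Sg A B))

theorem fstVar_tmSub_sigmaUnpair :
    HEq (S.tmSub (S.fstVar A B) (S.sigmaUnpair Sg A B)) (Sg.sfst (S.sigmaVar Sg A B)) := by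
  refine (S.tmSub_congr (S.tySub_comp A _ _) (S.tmCast_heq _ _) _).trans ?_
  refine (S.tmSub_comp (S.q Γ A) _ _).symm.trans ?_
  rw [S.sigmaUnpair_p]
  exact S.sigmaFstMap_q Sg A B

theorem sndVar_tmSub_sigmaUnpair :
    HEq (S.tmSub (S.sndVar A B) (S.sigmaUnpair Sg A B)) (Sg.ssnd (S.sigmaVar Sg A B)) :=
  (S.tmSub_congr (by rw [← S.tySub_comp, S.sec_wk, ← S.p_eq_pair_fstVar])
    (S.tmCast_heq _ _) _).trans (S.sigmaUnpair_q Sg A B)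

theorem varPair_tmSub_sigmaUnpair :
    HEq (S.tmSub (S.varPair Sg A B) (S.sigmaUnpair Sg A B)) (S.sigmaVar Sg A B) := by
  refine (Sg.spair_sub _ _ _ _ (S.tmCast_heq (S.tySub_sec_tySub _ _ _) _)).trans ?_
  refine (S.spair_congr Sg (by rw [← S.tySub_comp, S.sigmaUnpair_p_p])
    (S.tySub_wk_wk _ (S.sigmaUnpair_p_p Sg A B) A B) (S.fstVar_tmSub_sigmaUnpair Sg A B)
    ((S.tmCast_heq _ _).trans (S.sndVar_tmSub_sigmaUnpair Sg A B))).trans ?_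
  rw [Sg.pair_eta]

theorem sigmaUnpair_sigmaPairMap : S.sigmaUnpair Sg A B ≫ S.sigmaPairMap Sg A B = 𝟙 _ := by
  apply S.ext_hom_ext
  · rw [Category.assoc, S.sigmaPairMap_p, S.sigmaUnpair_p_p, Category.id_comp]
  · refine (S.tmSub_comp _ _ _).trans ?_
    refine (S.tmSub_congr (by rw [← S.tySub_comp, S.sigmaPairMap_p, Sg.Sig_sub])
      (S.sigmaPairMap_q Sg A B) _).trans ?_
    refine (S.varPair_tmSub_sigmaUnpair Sg A B).trans ?_
    exact (S.tmCast_heq _ _).trans (S.tmSub_id _).symm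

theorem sigmaPairMap_sigmaFstMap :
    S.sigmaPairMap Sg A B ≫ S.sigmaFstMap Sg A B = S.p (S.ext Γ A) B := by
  apply S.ext_hom_ext
  · rw [Category.assoc, S.sigmaFstMap_p, S.sigmaPairMap_p]
  · refine (S.tmSub_comp _ _ _).trans ?_
    refine (S.tmSub_congr (by rw [← S.tySub_comp, S.sigmaFstMap_p])
      (S.sigmaFstMap_q Sg A B) _).trans ?_
    refine (heq_of_eq (S.sfst_tmSub Sg _ _).symm).trans ?_
    refine (S.sfst_congr Sg (by rw [← S.tySub_comp, S.sigmaPairMap_p])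
      (S.tySub_wk_wk _ (S.sigmaPairMap_p Sg A B) A B)
      (S.sigmaVar_tmSub_sigmaPairMap Sg A B)).trans ?_
    rw [varPair, Sg.fst_pair]
    exact S.tmCast_heq _ _

theorem sigmaPairMap_sigmaUnpair : S.sigmaPairMap Sg A B ≫ S.sigmaUnpair Sg A B = 𝟙 _ := by
  apply S.ext_hom_ext
  · rw [Category.assoc, S.sigmaUnpair_p, S.sigmaPairMap_sigmaFstMap, Category.id_comp]
  · refine (S.tmSub_comp _ _ _).trans ?_
    refine (S.tmSub_congr
      (by rw [← S.tySub_comp, S.sigmaUnpair_p, S.sigmaFstMap_eq, S.tySub_comp])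
      (S.sigmaUnpair_q Sg A B) _).trans ?_
    refine (S.ssnd_tmSub Sg _ _).symm.trans ?_
    refine (S.ssnd_congr Sg (by rw [← S.tySub_comp, S.sigmaPairMap_p])
      (S.tySub_wk_wk _ (S.sigmaPairMap_p Sg A B) A B)
      (S.sigmaVar_tmSub_sigmaPairMap Sg A B)).trans ?_
    exact (Sg.snd_pair _ _).trans ((S.tmCast_heq _ _).trans (S.tmSub_id _).symm)

def sigmaIso : S.ext Γ (Sg.Sig A B) ≅ S.ext (S.ext Γ A) B where
  hom := S.sigmaUnpair Sg A B
  inv := S.sigmaPairMap Sg A B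
  hom_inv_id := S.sigmaUnpair_sigmaPairMap Sg A B
  inv_hom_id := S.sigmaPairMap_sigmaUnpair Sg A B

def extIsoSigma {Δ : S.C} {D : S.Ty S.unit} (φ : Δ ≅ S.ext S.unit D) (A : S.Ty Δ) :
    S.ext Δ A ≅ S.ext S.unit (Sg.Sig D (S.tySub A φ.inv)) :=
  S.extIso φ (S.tySub A φ.inv) A (by rw [← S.tySub_comp, φ.hom_inv_id, S.tySub_id]) ≪≫
    (S.sigmaIso Sg D (S.tySub A φ.inv)).symm

end Sigma

theorem heq_of_eq_one (U : UnitTyStructure S) {Γ : S.C} {A B : S.Ty Γ} (hA : A = U.one Γ)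
    (hB : B = U.one Γ) (x : S.Tm Γ A) (y : S.Tm Γ B) : HEq x y := by
  subst hA hB
  rw [U.star_unique x, U.star_unique y]

def unitIso (U : UnitTyStructure S) : S.unit ≅ S.ext S.unit (U.one S.unit) where
  hom := S.sec (U.star S.unit)
  inv := S.p S.unit (U.one S.unit)
  hom_inv_id := S.sec_p _
  inv_hom_id := by
    apply S.ext_hom_ext
    · rw [Category.assoc, S.sec_p, Category.comp_id, Category.id_comp]
    · exact S.heq_of_eq_one U (by rw [← S.tySub_comp, U.one_sub])
        (by rw [← S.tySub_comp, U.one_sub]) _ _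

theorem exists_iso_ext_unit (hS : S.Contextual) (U : UnitTyStructure S)
    (Sg : SigmaStructure S) (Γ : S.C) : ∃ D : S.Ty S.unit, Nonempty (Γ ≅ S.ext S.unit D) := by
  obtain ⟨l, hl_zero, hl_succ⟩ := hS
  induction hn : l Γ generalizing Γ with
  | zero => exact ⟨U.one S.unit, ⟨eqToIso ((hl_zero Γ).mp hn) ≪≫ S.unitIso U⟩⟩
  | succ n ih =>
    obtain ⟨⟨Δ, A⟩, ⟨rfl, hΔ⟩, -⟩ := (hl_succ Γ n).mp hn
    obtain ⟨D, ⟨φ⟩⟩ := ih Δ hΔ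
    exact ⟨_, ⟨S.extIsoSigma Sg φ A⟩⟩

end Cwf

/-- a contextual cwf with an `N₁`-structure and a Σ-structure
is democratic (contexts are represented by iterated Σ-types, and the empty
context by `N₁`). -/
theorem contextual_unit_sigma_implies_democratic (S : Cwf)
    (hS : S.Contextual) (U : UnitTyStructure S) (Sg : SigmaStructure S) :
    ∃ bar : S.C → S.Ty S.unit,
      (∀ Γ : S.C, Nonempty (Γ ≅ S.ext S.unit (bar Γ))) ∧
      bar S.unit = U.one S.unit := by
  classical
  choose bar hbar using S.exists_iso_ext_unit hS U Sg
  refine ⟨Function.update bar S.unit (U.one S.unit), fun Γ => ?_, Function.update_self ..⟩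
  by_cases hΓ : Γ = S.unit
  · subst hΓ
    rw [Function.update_self]
    exact ⟨S.unitIso U⟩
  · rw [Function.update_of_ne hΓ]
    exact hbar Γ
end
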